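/- arXiv:2503.09770 — 3 statements merged into one kernel-verified Lean document; each statement's English description precedes it below -/
import Mathlib

section
/- The assignment sending a to the Möbius transformation z ↦ -1/z and b to z ↦ -1/(z+1) extends to a group isomorphism from the free product ℤ/2 * ℤ/3 onto PSL(2,ℤ). -/
/-- `SL(2,ℤ)`. -/
abbrev SL2Z := Matrix.SpecialLinearGroup (Fin 2) ℤ

/-- `PSL(2,ℤ) = SL(2,ℤ)/{±I}`, the quotient of `SL(2,ℤ)` by its center. -/
abbrev PSL2Z := SL2Z ⧸ Subgroup.center SL2Z

/-- The matrix `S = [[0,-1],[1,0]]`, acting on the upper half-plane as `z ↦ -1/z`. -/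
def Smat : SL2Z := ⟨!![0, -1; 1, 0], by simp [Matrix.det_fin_two_of]⟩

/-- The matrix `T = [[0,-1],[1,1]]`, acting as `z ↦ -1/(z+1)`. -/
def Tmat : SL2Z := ⟨!![0, -1; 1, 1], by simp [Matrix.det_fin_two_of]⟩

/-!
Surjectivity: `S` and `ST = [[1,1],[0,1]]` generate `SL(2,ℤ)`.

Injectivity is the ping-pong lemma for the Möbius action of `PSL(2,ℤ)` on `ℝ ∪ {∞}`:
`S : z ↦ -1/z` maps the negative reals to positive ones, while `T : z ↦ -1/(z+1)` maps the
positive reals into `(-1, 0)` and `(-1, 0)` into the negative reals, so both `T` and `T²` map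
positive reals to negative ones.
-/

open Cardinal Pointwise Set

section ZModPowHom

variable {M : Type*} [Monoid M] (n : ℕ) [NeZero n] (g : M) (hg : g ^ n = 1)

def zmodPowHom : Multiplicative (ZMod n) →* M where
  toFun a := g ^ a.toAdd.val
  map_one' := by simp
  map_mul' a b := by rw [toAdd_mul, ZMod.val_add, ← pow_eq_pow_mod _ hg, pow_add]

theorem zmodPowHom_ofAdd (a : ZMod n) : zmodPowHom n g hg (.ofAdd a) = g ^ a.val := rfl

theorem exists_zmodPowHom_eq_pow_of_ne_one {a : Multiplicative (ZMod n)} (ha : a ≠ 1) :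
    ∃ k, 0 < k ∧ k < n ∧ zmodPowHom n g hg a = g ^ k :=
  ⟨a.toAdd.val, Nat.pos_of_ne_zero fun h => ha (ZMod.val_eq_zero _ |>.mp h), ZMod.val_lt _, rfl⟩

end ZModPowHom

namespace Monoid.Coprod

universe u

variable {G H : Type u} [Group G] [Group H]

abbrev boolFamily (G H : Type u) : Bool → Type u := fun b => cond b H G

instance (b : Bool) : Group (boolFamily G H b) :=
  match b with
  | false => ‹Group G›
  | true => ‹Group H›

def toCoprodI : G ∗ H →* CoprodI (boolFamily G H) :=
  lift (CoprodI.of (M := boolFamily G H) (i := false))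
    (CoprodI.of (M := boolFamily G H) (i := true))

def ofCoprodI : CoprodI (boolFamily G H) →* G ∗ H :=
  CoprodI.lift fun
    | false => inl
    | true => inr

theorem ofCoprodI_comp_toCoprodI : ofCoprodI.comp toCoprodI = MonoidHom.id (G ∗ H) :=
  hom_ext (MonoidHom.ext fun _ => CoprodI.lift_of _ _) (MonoidHom.ext fun _ => CoprodI.lift_of _ _)

theorem toCoprodI_injective : Function.Injective (toCoprodI : G ∗ H →* _) :=
  Function.LeftInverse.injective (g := ofCoprodI) (DFunLike.congr_fun ofCoprodI_comp_toCoprodI)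

theorem lift_injective_of_ping_pong {K α : Type*} [Group K] [MulAction K α]
    (f : G →* K) (g : H →* K) (hcard : 3 ≤ #G ∨ 3 ≤ #H)
    (X Y : Set α) (hX : X.Nonempty) (hY : Y.Nonempty) (hXY : Disjoint X Y)
    (hf : ∀ a, a ≠ 1 → f a • Y ⊆ X) (hg : ∀ b, b ≠ 1 → g b • X ⊆ Y) :
    Function.Injective (lift f g) := by
  let F : ∀ b, boolFamily G H b →* K := fun
    | false => f
    | true => g
  have hlift : lift f g = (CoprodI.lift F).comp toCoprodI :=
    hom_ext (MonoidHom.ext fun x => (CoprodI.lift_of F (i := false) x).symm)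
      (MonoidHom.ext fun x => (CoprodI.lift_of F (i := true) x).symm)
  have hcard_family : 3 ≤ #Bool ∨ ∃ b, 3 ≤ #(boolFamily G H b) :=
    Or.inr (hcard.elim (⟨false, ·⟩) (⟨true, ·⟩))
  have hpp : Pairwise fun i j => ∀ h : boolFamily G H i, h ≠ 1 →
      F i h • (fun b => cond b Y X) j ⊆ (fun b => cond b Y X) i := by
    rintro (_ | _) (_ | _) hij <;> first | exact absurd rfl hij | assumption
  rw [hlift, MonoidHom.coe_comp]
  refine (CoprodI.lift_injective_of_ping_pong F hcard_family _ ?_ ?_ hpp).comp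
    toCoprodI_injective
  · rintro (_ | _) <;> assumption
  · rintro (_ | _) (_ | _) hij
    exacts [absurd rfl hij, hXY, hXY.symm, absurd rfl hij]

end Monoid.Coprod

theorem OnePoint.smul_eq_self_of_isScalar {K : Type*} [Field K] [DecidableEq K]
    {g : GL (Fin 2) K} (h01 : g 0 1 = 0) (h10 : g 1 0 = 0) (h : g 0 0 = g 1 1)
    (x : OnePoint K) : g • x = x := by
  have h11 : g 1 1 ≠ 0 := by
    intro h11
    have := g.det_ne_zero
    rw [Matrix.det_fin_two, h01, h11] at this
    simp at this
  cases x with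
  | infty => simp [OnePoint.smul_infty_eq_ite, h10]
  | coe k => simp [OnePoint.smul_some_eq_ite, h01, h10, h, h11]

theorem Smat_sq : Smat ^ 2 = -1 := by decide

theorem Tmat_pow_three : Tmat ^ 3 = -1 := by decide

theorem closure_Smat_Tmat : Subgroup.closure {Smat, Tmat} = ⊤ := by
  have hS : ModularGroup.S = Smat := rfl
  have hT : ModularGroup.T = Smat⁻¹ * Tmat := by decide
  rw [eq_top_iff, ← SpecialLinearGroup.SL2Z_generators, Subgroup.closure_le, hS, hT]
  rintro _ (rfl | rfl)
  · exact Subgroup.subset_closure (.inl rfl)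
  · exact mul_mem (inv_mem (Subgroup.subset_closure (.inl rfl)))
      (Subgroup.subset_closure (.inr rfl))

namespace SL2Z

theorem mapGL_smul_eq_self_of_mem_center {g : SL2Z} (hg : g ∈ Subgroup.center SL2Z)
    (x : OnePoint ℝ) : Matrix.SpecialLinearGroup.mapGL ℝ g • x = x := by
  obtain ⟨r, -, hr⟩ := Matrix.SpecialLinearGroup.mem_center_iff.mp hg
  have hg_apply (i j : Fin 2) : g i j = if i = j then r else 0 := by
    rw [← hr, Matrix.scalar_apply, Matrix.diagonal_apply]
  exact OnePoint.smul_eq_self_of_isScalar (g := Matrix.SpecialLinearGroup.mapGL ℝ g)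
    (by simp [hg_apply]) (by simp [hg_apply]) (by simp [hg_apply]) x

theorem mapGL_smul_coe (g : SL2Z) {x : ℝ} (hx : (g 1 0 : ℝ) * x + g 1 1 ≠ 0) :
    Matrix.SpecialLinearGroup.mapGL ℝ g • (x : OnePoint ℝ) =
      (((g 0 0 : ℝ) * x + g 0 1) / ((g 1 0 : ℝ) * x + g 1 1) : ℝ) := by
  simpa [OnePoint.smul_some_eq_ite] using hx

end SL2Z

namespace PSL2Z

noncomputable def toPerm : PSL2Z →* Equiv.Perm (OnePoint ℝ) :=
  QuotientGroup.lift _ ((MulAction.toPermHom _ _).comp (Matrix.SpecialLinearGroup.mapGL ℝ))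
    fun _ hg => Equiv.ext (SL2Z.mapGL_smul_eq_self_of_mem_center hg)

theorem toPerm_mk_smul_image_subset {g : SL2Z} {s t : Set ℝ}
    (h : ∀ x ∈ s, (g 1 0 : ℝ) * x + g 1 1 ≠ 0 ∧
      ((g 0 0 : ℝ) * x + g 0 1) / ((g 1 0 : ℝ) * x + g 1 1) ∈ t) :
    toPerm (QuotientGroup.mk g) • (OnePoint.some '' s) ⊆ OnePoint.some '' t := by
  rintro _ ⟨_, ⟨x, hx, rfl⟩, rfl⟩
  exact ⟨_, (h x hx).2, (SL2Z.mapGL_smul_coe g (h x hx).1).symm⟩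

theorem toPerm_Smat_smul_Iio :
    toPerm (QuotientGroup.mk Smat) • (OnePoint.some '' Iio (0 : ℝ)) ⊆
      OnePoint.some '' Ioi 0 :=
  toPerm_mk_smul_image_subset fun x (hx : x < 0) => by
    simpa [Smat] using ⟨hx.ne, div_pos_of_neg_of_neg neg_one_lt_zero hx⟩

theorem toPerm_Tmat_smul_Ioi :
    toPerm (QuotientGroup.mk Tmat) • (OnePoint.some '' Ioi (0 : ℝ)) ⊆
      OnePoint.some '' Ioo (-1) 0 :=
  toPerm_mk_smul_image_subset fun x (hx : 0 < x) => by
    have hx1 : 0 < x + 1 := by linarith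
    have hlt : -1 < -1 / (x + 1) := by
      rw [neg_div, neg_lt_neg_iff, div_lt_one hx1]
      linarith
    simpa [Tmat] using ⟨hx1.ne', hlt, div_neg_of_neg_of_pos neg_one_lt_zero hx1⟩

theorem toPerm_Tmat_smul_Ioo :
    toPerm (QuotientGroup.mk Tmat) • (OnePoint.some '' Ioo (-1 : ℝ) 0) ⊆
      OnePoint.some '' Iio 0 :=
  toPerm_mk_smul_image_subset fun x (hx : x ∈ Ioo (-1) 0) => by
    have hx1 : 0 < x + 1 := by linarith [hx.1]
    simpa [Tmat] using ⟨hx1.ne', div_neg_of_neg_of_pos neg_one_lt_zero hx1⟩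

theorem mk_neg_one : (QuotientGroup.mk (-1 : SL2Z) : PSL2Z) = 1 :=
  (QuotientGroup.eq_one_iff _).mpr (Subgroup.mem_center_iff.mpr fun _ => by simp)

theorem mk_Smat_sq : (QuotientGroup.mk Smat : PSL2Z) ^ 2 = 1 := by
  rw [← QuotientGroup.mk_pow, Smat_sq, mk_neg_one]

theorem mk_Tmat_pow_three : (QuotientGroup.mk Tmat : PSL2Z) ^ 3 = 1 := by
  rw [← QuotientGroup.mk_pow, Tmat_pow_three, mk_neg_one]

theorem closure_mk_Smat_Tmat :
    Subgroup.closure {(QuotientGroup.mk Smat : PSL2Z), QuotientGroup.mk Tmat} = ⊤ := by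
  rw [← QuotientGroup.coe_mk', ← image_pair, ← MonoidHom.map_closure, closure_Smat_Tmat,
    Subgroup.map_top_of_surjective _ (QuotientGroup.mk'_surjective _)]

noncomputable def ofZModTwo : Multiplicative (ZMod 2) →* PSL2Z :=
  zmodPowHom 2 (QuotientGroup.mk Smat) mk_Smat_sq

noncomputable def ofZModThree : Multiplicative (ZMod 3) →* PSL2Z :=
  zmodPowHom 3 (QuotientGroup.mk Tmat) mk_Tmat_pow_three

theorem ofZModTwo_ofAdd_one : ofZModTwo (.ofAdd 1) = QuotientGroup.mk Smat := by
  rw [ofZModTwo, zmodPowHom_ofAdd, ZMod.val_one, pow_one]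

theorem ofZModThree_ofAdd_one : ofZModThree (.ofAdd 1) = QuotientGroup.mk Tmat := by
  rw [ofZModThree, zmodPowHom_ofAdd, ZMod.val_one, pow_one]

noncomputable def ofCoprod :
    Monoid.Coprod (Multiplicative (ZMod 2)) (Multiplicative (ZMod 3)) →* PSL2Z :=
  Monoid.Coprod.lift ofZModTwo ofZModThree

theorem ofCoprod_surjective : Function.Surjective ofCoprod := by
  rw [← MonoidHom.range_eq_top, eq_top_iff, ← closure_mk_Smat_Tmat, Subgroup.closure_le]
  rintro _ (rfl | rfl)
  · exact ⟨.inl (.ofAdd 1), ofZModTwo_ofAdd_one⟩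
  · exact ⟨.inr (.ofAdd 1), ofZModThree_ofAdd_one⟩

theorem toPerm_ofZModTwo_smul_Iio {a : Multiplicative (ZMod 2)} (ha : a ≠ 1) :
    toPerm (ofZModTwo a) • (OnePoint.some '' Iio (0 : ℝ)) ⊆ OnePoint.some '' Ioi 0 := by
  obtain ⟨k, hk0, hk2, hk⟩ := exists_zmodPowHom_eq_pow_of_ne_one _ _ mk_Smat_sq ha
  obtain rfl : k = 1 := by omega
  rw [ofZModTwo, hk, pow_one]
  exact toPerm_Smat_smul_Iio

theorem toPerm_ofZModThree_smul_Ioi {b : Multiplicative (ZMod 3)} (hb : b ≠ 1) :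
    toPerm (ofZModThree b) • (OnePoint.some '' Ioi (0 : ℝ)) ⊆ OnePoint.some '' Iio 0 := by
  obtain ⟨k, hk0, hk3, hk⟩ := exists_zmodPowHom_eq_pow_of_ne_one _ _ mk_Tmat_pow_three hb
  rw [ofZModThree, hk, map_pow]
  interval_cases k
  · rw [pow_one]
    exact toPerm_Tmat_smul_Ioi.trans (image_mono Ioo_subset_Iio_self)
  · rw [sq, mul_smul]
    exact (smul_set_mono toPerm_Tmat_smul_Ioi).trans toPerm_Tmat_smul_Ioo

theorem ofCoprod_injective : Function.Injective ofCoprod := by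
  suffices Function.Injective (toPerm.comp ofCoprod) from this.of_comp (f := toPerm)
  have hdisj : Disjoint (OnePoint.some '' Ioi (0 : ℝ)) (OnePoint.some '' Iio 0) :=
    (disjoint_image_iff OnePoint.coe_injective).mpr Ioi_disjoint_Iio_same
  rw [ofCoprod, Monoid.Coprod.comp_lift]
  exact Monoid.Coprod.lift_injective_of_ping_pong _ _ (.inr (by simp))
    (OnePoint.some '' Ioi (0 : ℝ)) (OnePoint.some '' Iio 0)
    ⟨_, 1, mem_Ioi.mpr one_pos, rfl⟩ ⟨_, -1, mem_Iio.mpr neg_one_lt_zero, rfl⟩ hdisj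
    (fun _ => toPerm_ofZModTwo_smul_Iio) (fun _ => toPerm_ofZModThree_smul_Ioi)

end PSL2Z

/-- the assignment sending the generator `a` of `ℤ/2` to the Möbius
transformation `z ↦ -1/z` (i.e. the class of `S` in `PSL(2,ℤ)`) and the generator
`b` of `ℤ/3` to `z ↦ -1/(z+1)` (the class of `T`) extends to a group isomorphism
from the free product `ℤ/2 * ℤ/3` onto `PSL(2,ℤ)`. -/
theorem free_product_iso_PSL2Z :
    ∃ e : Monoid.Coprod (Multiplicative (ZMod 2)) (Multiplicative (ZMod 3)) ≃* PSL2Z,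
      e (Monoid.Coprod.inl (Multiplicative.ofAdd (1 : ZMod 2))) =
        QuotientGroup.mk Smat ∧
      e (Monoid.Coprod.inr (Multiplicative.ofAdd (1 : ZMod 3))) =
        QuotientGroup.mk Tmat :=
  ⟨MulEquiv.ofBijective PSL2Z.ofCoprod ⟨PSL2Z.ofCoprod_injective, PSL2Z.ofCoprod_surjective⟩,
    PSL2Z.ofZModTwo_ofAdd_one, PSL2Z.ofZModThree_ofAdd_one⟩
end

section
/- With weights 𝔞,𝔟,𝔟̄,𝔟′,𝔟̄′ ≥ 0 summing to 1 and the master system as above restricted to y + ȳ = 1, a value y ∈ (0,1) extends to a solution (x, y, 1−y) of the full system if and only if y satisfies the consistency equation [y − 𝔟̄(1−y) − 𝔟′]·[𝔞(1−y) + 𝔟′y + 𝔟̄] = [𝔞y + 𝔟̄′(1−y) + 𝔟]·[(1−y) − 𝔟y − 𝔟̄′], in which case x = (1 − 𝔟y − 𝔟̄(1−y) − 𝔟′ − 𝔟̄′)/(1 − 𝔟′(1−y) − 𝔟̄′y). -/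
/-!
Under `𝔞 + 𝔟 + 𝔟̄ + 𝔟′ + 𝔟̄′ = 1` the first equation is the sum of the other two, which read
`y - 𝔟̄ȳ - 𝔟′ = x (𝔞y + 𝔟̄′ȳ + 𝔟)` and `ȳ - 𝔟y - 𝔟̄′ = x (𝔞ȳ + 𝔟′y + 𝔟̄)`. So `x` is a common
ratio of two pairs, which exists iff their cross products agree; it is then the ratio of the sums,
and the sum of the coefficients `1 - 𝔟′ȳ - 𝔟̄′y` is positive for `0 < y < 1`.
-/

/-- The master system with `ȳ = 1 - y` substituted. -/
def MasterSystem (af bf bbf bf' bbf' x y : ℝ) : Prop :=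
  x = af + bf * (1 - y) + bbf * y + bf' * x * (1 - y) + bbf' * x * y ∧
  y = af * x * y + bf * x + bbf * (1 - y) + bf' + bbf' * x * (1 - y) ∧
  (1 - y) = af * x * (1 - y) + bf * y + bbf * x + bf' * x * y + bbf'

section CommonRatio

variable {K : Type*} [Field K] {a b c e x : K}

theorem common_ratio_eq_div (ha : a = x * c) (he : e = x * b) (hbc : b + c ≠ 0) :
    x = (a + e) / (b + c) := by
  rw [eq_div_iff hbc]
  linear_combination -ha - he

theorem exists_common_ratio_iff (hbc : b + c ≠ 0) :
    (∃ x, a = x * c ∧ e = x * b) ↔ a * b = c * e := by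
  constructor
  · rintro ⟨x, ha, he⟩
    linear_combination b * ha - c * he
  · intro h
    refine ⟨(a + e) / (b + c), ?_, ?_⟩ <;> field_simp
    · linear_combination h
    · linear_combination -h

end CommonRatio

section MasterSystem

variable {af bf bbf bf' bbf' x y : ℝ}

theorem masterSystem_iff (hsum : af + bf + bbf + bf' + bbf' = 1) :
    MasterSystem af bf bbf bf' bbf' x y ↔
      y - bbf * (1 - y) - bf' = x * (af * y + bbf' * (1 - y) + bf) ∧
        (1 - y) - bf * y - bbf' = x * (af * (1 - y) + bf' * y + bbf) := by
  constructor
  · rintro ⟨-, h2, h3⟩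
    exact ⟨by linear_combination h2, by linear_combination h3⟩
  · rintro ⟨h2, h3⟩
    exact ⟨by linear_combination -(x + 1) * hsum - h2 - h3, by linear_combination h2,
      by linear_combination h3⟩

theorem one_sub_mul_sub_mul_pos (hbf' : 0 ≤ bf') (hbbf' : 0 ≤ bbf') (hle : bf' + bbf' ≤ 1)
    (hy : 0 < y) (hy1 : y < 1) : 0 < 1 - bf' * (1 - y) - bbf' * y := by
  nlinarith [mul_nonneg hbf' hy.le, mul_nonneg hbbf' (sub_pos.2 hy1).le,
    mul_nonneg (sub_nonneg.2 hle) hy.le, mul_nonneg (sub_nonneg.2 hle) (sub_pos.2 hy1).le]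

end MasterSystem

/-- with weights ≥ 0 summing to 1 and `y ∈ (0,1)`, the value `y` extends
to a solution `(x, y, 1-y)` of the full master system iff `y` satisfies the
consistency equation, in which case `x` is given by the explicit formula. -/
theorem master_system_consistency
    (af bf bbf bf' bbf' y : ℝ)
    (haf : 0 ≤ af) (hbf : 0 ≤ bf) (hbbf : 0 ≤ bbf) (hbf' : 0 ≤ bf') (hbbf' : 0 ≤ bbf')
    (hsum : af + bf + bbf + bf' + bbf' = 1)
    (hy : 0 < y) (hy1 : y < 1) :
    ((∃ x : ℝ, MasterSystem af bf bbf bf' bbf' x y) ↔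
      (y - bbf * (1 - y) - bf') * (af * (1 - y) + bf' * y + bbf) =
        (af * y + bbf' * (1 - y) + bf) * ((1 - y) - bf * y - bbf')) ∧
    (∀ x : ℝ, MasterSystem af bf bbf bf' bbf' x y →
      x = (1 - bf * y - bbf * (1 - y) - bf' - bbf') / (1 - bf' * (1 - y) - bbf' * y)) := by
  have hden : (af * (1 - y) + bf' * y + bbf) + (af * y + bbf' * (1 - y) + bf) =
      1 - bf' * (1 - y) - bbf' * y := by
    linear_combination hsum
  have hpos := one_sub_mul_sub_mul_pos hbf' hbbf' (by linarith) hy hy1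
  have hne : (af * (1 - y) + bf' * y + bbf) + (af * y + bbf' * (1 - y) + bf) ≠ 0 :=
    hden ▸ hpos.ne'
  simp only [masterSystem_iff hsum]
  refine ⟨exists_common_ratio_iff hne, fun x ⟨h2, h3⟩ => ?_⟩
  rw [common_ratio_eq_div h2 h3 hne, hden]
  congr 1
  ring
end

section
/- For a nearest-neighbour step distribution (𝔟′ = 𝔟̄′ = 0), the unique solution y ∈ (0,1) of the consistency equation satisfies y = 1/2 if and only if 𝔟 = 𝔟̄; i.e., the harmonic measure is in the Minkowski class iff the step distribution is symmetric. -/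
/-! In `z = 2y - 1` the consistency equation reads `a z² + b z - a = 0` with `a = αδ` and
`b = 4 - (α + 1)² + δ² > 0`. Hence `z = 0` is a root exactly when `a = 0`, and any root is
`0` once `a = 0`, since then `b z = 0`. -/

theorem eq_zero_iff_of_mul_sq_add_mul_sub_eq_zero {R : Type*} [CommRing R] [NoZeroDivisors R]
    {a b z : R} (hb : b ≠ 0) (h : a * z ^ 2 + b * z - a = 0) : z = 0 ↔ a = 0 := by
  constructor
  · rintro rfl
    simpa using h
  · rintro rfl
    have hbz : b * z = 0 := by linear_combination h
    exact (mul_eq_zero.mp hbz).resolve_left hb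

theorem minkowski_iff_symmetric_general
    (α δ y : ℝ) (hα : 0 < α) (hα1 : α < 1)
    (heq : α * δ * (2 * y - 1) ^ 2 + (4 - (α + 1) ^ 2 + δ ^ 2) * (2 * y - 1)
            - α * δ = 0) :
    y = 1 / 2 ↔ δ = 0 := by
  have hb : 0 < 4 - (α + 1) ^ 2 + δ ^ 2 := by nlinarith [sq_nonneg δ]
  have hy : y = 1 / 2 ↔ 2 * y - 1 = 0 := by constructor <;> intro <;> linarith
  rw [hy, eq_zero_iff_of_mul_sq_add_mul_sub_eq_zero hb.ne' heq, mul_eq_zero,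
    or_iff_right hα.ne']

/-- for a nearest-neighbour step distribution with `α = μ(a) ∈ (0,1)`
and `δ = μ(b) - μ(b̄)`, `|δ| ≤ 1 - α`, a solution `y ∈ (0,1)` of the consistency
equation (written as the quadratic in `z = 2y - 1`) satisfies `y = 1/2` if and only
if `δ = 0`, i.e. the harmonic measure is in the Minkowski class iff the step
distribution is symmetric. -/
theorem minkowski_iff_symmetric
    (α δ y : ℝ) (hα : 0 < α) (hα1 : α < 1) (hδ : |δ| ≤ 1 - α)
    (hy : 0 < y) (hy1 : y < 1)
    (heq : α * δ * (2 * y - 1) ^ 2 + (4 - (α + 1) ^ 2 + δ ^ 2) * (2 * y - 1)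
            - α * δ = 0) :
    y = 1 / 2 ↔ δ = 0 :=
  minkowski_iff_symmetric_general α δ y hα hα1 heq
end
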